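/- For the bilevel problem with lower level Y(x) = argmin_{w ∈ [-1,1]} x·w: a point (x,y) with x² + y² ≤ 2 and y ∈ Y(x) minimizes f(x,y) = x y⁵ - y⁶ if and only if (x,y) ∈ {(-1,1), (1,-1)}, and the minimal value is -2. -/
import Mathlib


open Set

/-- Lower-level solution map: `Y(x) = argmin_{w ∈ [-1,1]} x·w`. -/
def Yll (x : ℝ) : Set ℝ := {y ∈ Icc (-1 : ℝ) 1 | ∀ w ∈ Icc (-1 : ℝ) 1, x * y ≤ x * w}

/-- Bilevel feasible set: `x² + y² ≤ 2` and `y ∈ Y(x)`. -/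
def FeasEx : Set (ℝ × ℝ) := {p | p.1 ^ 2 + p.2 ^ 2 ≤ 2 ∧ p.2 ∈ Yll p.1}

noncomputable def fEx (p : ℝ × ℝ) : ℝ := p.1 * p.2 ^ 5 - p.2 ^ 6

lemma memA : ((-1 : ℝ), (1 : ℝ)) ∈ FeasEx := by
  refine ⟨by norm_num, ⟨by norm_num, ?_⟩⟩
  rintro w ⟨hw1, hw2⟩
  simp only; nlinarith

lemma memB : ((1 : ℝ), (-1 : ℝ)) ∈ FeasEx := by
  refine ⟨by norm_num, ⟨by norm_num, ?_⟩⟩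
  rintro w ⟨hw1, hw2⟩
  simp only; nlinarith

lemma keylem (x y : ℝ) (hs : x ^ 2 + y ^ 2 ≤ 2) (hy1 : -1 ≤ y) (hy2 : y ≤ 1)
    (h1 : x * y ≤ x * 1) (h2 : x * y ≤ x * (-1)) :
    -2 ≤ x * y ^ 5 - y ^ 6 ∧
      (x * y ^ 5 - y ^ 6 = -2 → (x = -1 ∧ y = 1) ∨ (x = 1 ∧ y = -1)) := by
  rcases lt_trichotomy x 0 with hx | hx | hx
  · have hy : y = 1 := by nlinarith
    subst hy
    constructor
    · nlinarith
    · intro h; left; constructor <;> nlinarith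
  · subst hx
    constructor
    · nlinarith [pow_le_one₀ (abs_nonneg y) (abs_le.mpr ⟨hy1, hy2⟩) (n := 6),
        abs_pow y 6, le_abs_self (y ^ 6)]
    · intro h
      exfalso
      nlinarith [pow_le_one₀ (abs_nonneg y) (abs_le.mpr ⟨hy1, hy2⟩) (n := 6),
        abs_pow y 6, le_abs_self (y ^ 6)]
  · have hy : y = -1 := by nlinarith
    subst hy
    constructor
    · nlinarith
    · intro h; right; constructor <;> nlinarith

lemma lb (p : ℝ × ℝ) (hp : p ∈ FeasEx) : -2 ≤ fEx p := by
  obtain ⟨hs, ⟨hy1, hy2⟩, hy⟩ := hp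
  exact (keylem p.1 p.2 hs hy1 hy2 (hy 1 (by norm_num)) (hy (-1) (by norm_num))).1

lemma eq2 (p : ℝ × ℝ) (hp : p ∈ FeasEx) (h : fEx p = -2) :
    p = ((-1 : ℝ), (1 : ℝ)) ∨ p = ((1 : ℝ), (-1 : ℝ)) := by
  obtain ⟨hs, ⟨hy1, hy2⟩, hy⟩ := hp
  rcases (keylem p.1 p.2 hs hy1 hy2 (hy 1 (by norm_num)) (hy (-1) (by norm_num))).2 h with
    ⟨h1, h2⟩ | ⟨h1, h2⟩
  · left; exact Prod.ext h1 h2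
  · right; exact Prod.ext h1 h2

theorem stmt9 :
    (∀ p ∈ FeasEx, ((∀ q ∈ FeasEx, fEx p ≤ fEx q) ↔
      (p = ((-1 : ℝ), (1 : ℝ)) ∨ p = ((1 : ℝ), (-1 : ℝ))))) ∧
    IsLeast (fEx '' FeasEx) (-2) := by
  have hvA : fEx ((-1 : ℝ), (1 : ℝ)) = -2 := by norm_num [fEx]
  have hvB : fEx ((1 : ℝ), (-1 : ℝ)) = -2 := by norm_num [fEx]
  constructor
  · intro p hp
    constructor
    · intro hmin
      have h1 := hmin _ memB
      have h2 := lb p hp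
      exact eq2 p hp (by rw [hvB] at h1; linarith)
    · rintro (rfl | rfl) q hq
      · rw [hvA]; exact lb q hq
      · rw [hvB]; exact lb q hq
  · exact ⟨⟨_, memB, hvB⟩, by rintro v ⟨q, hq, rfl⟩; exact lb q hq⟩
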